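/- arXiv:1203.4580 — 2 statements merged into one kernel-verified Lean document; each statement's English description precedes it below -/
import Mathlib

section
/- Suppose ∇f is Lipschitz with constant L(f), L > L(f), and x* is an optimal solution of min{f(x) : ‖x‖₀ ≤ s}. Then x* is an L-stationary point and moreover the set P_{C_s}(x* − (1/L)∇f(x*)) is the singleton {x*}. -/
/-!
For a feasible `y`, the descent lemma and the optimality of `x*` give
`⟪∇f x*, y - x*⟫ ≥ f y - f x* - (L_f/2)‖y - x*‖² ≥ -(L_f/2)‖y - x*‖²`. With `w = x* - (1/L)∇f x*`,
expanding `‖y - w‖² = ‖(y - x*) + (1/L)∇f x*‖²` then yields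
`‖y - w‖² ≥ ‖x* - w‖² + (1 - L_f/L)‖y - x*‖²`, so `x*` is the unique nearest feasible point to `w`.
-/

noncomputable section
open scoped RealInnerProductSpace
open Set

/-- the number of nonzero components of `x` -/
def norm0 {n : ℕ} (x : EuclideanSpace ℝ (Fin n)) : ℕ :=
  (Finset.univ.filter fun i => x i ≠ 0).card

/-- the sparsity constraint set `C_s` -/
def Cs (n s : ℕ) : Set (EuclideanSpace ℝ (Fin n)) := {x | norm0 x ≤ s}

/-- the set-valued Euclidean projection onto `Cs n s` -/
def projCs (n s : ℕ) (w : EuclideanSpace ℝ (Fin n)) : Set (EuclideanSpace ℝ (Fin n)) :=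
  {y | y ∈ Cs n s ∧ ∀ z ∈ Cs n s, ‖y - w‖ ≤ ‖z - w‖}

/-- the s-th largest absolute value of a component of `x` -/
def Msval {n : ℕ} (s : ℕ) (x : EuclideanSpace ℝ (Fin n)) : ℝ :=
  (((List.ofFn fun i => |x i|).mergeSort (· ≥ ·)).getD (s - 1) 0)

section Descent

variable {E : Type*} [NormedAddCommGroup E] [InnerProductSpace ℝ E] [CompleteSpace E]
  {f : E → ℝ} {Lf : ℝ}

theorem hasDerivAt_comp_add_smul (hf : Differentiable ℝ f) (x d : E) (t : ℝ) :
    HasDerivAt (fun t : ℝ => f (x + t • d)) ⟪gradient f (x + t • d), d⟫ t := by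
  have hline : HasDerivAt (fun t : ℝ => x + t • d) d t := by
    simpa using ((hasDerivAt_id t).smul_const d).const_add x
  rw [inner_gradient_left]
  exact (hf _).hasFDerivAt.comp_hasDerivAt t hline

theorem inner_gradient_add_smul_sub_le
    (hlip : ∀ x y, ‖gradient f x - gradient f y‖ ≤ Lf * ‖x - y‖) (x d : E) {t : ℝ}
    (ht : 0 ≤ t) :
    ⟪gradient f (x + t • d) - gradient f x, d⟫ ≤ Lf * t * ‖d‖ ^ 2 :=
  calc _ ≤ ‖gradient f (x + t • d) - gradient f x‖ * ‖d‖ := real_inner_le_norm _ _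
    _ ≤ Lf * ‖x + t • d - x‖ * ‖d‖ := mul_le_mul_of_nonneg_right (hlip _ _) (norm_nonneg d)
    _ = Lf * t * ‖d‖ ^ 2 := by
      rw [add_sub_cancel_left, norm_smul, Real.norm_of_nonneg ht]; ring

theorem le_add_inner_gradient_add_sq (hf : Differentiable ℝ f)
    (hlip : ∀ x y, ‖gradient f x - gradient f y‖ ≤ Lf * ‖x - y‖) (x y : E) :
    f y ≤ f x + ⟪gradient f x, y - x⟫ + Lf / 2 * ‖y - x‖ ^ 2 := by
  set d := y - x
  have hφ : ∀ t : ℝ, HasDerivAt (fun t => f (x + t • d) - t * ⟪gradient f x, d⟫)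
      (⟪gradient f (x + t • d), d⟫ - ⟪gradient f x, d⟫) t := fun t =>
    (hasDerivAt_comp_add_smul hf x d t).sub (hasDerivAt_mul_const _)
  have hB : ∀ t : ℝ, HasDerivAt (fun t => f x + Lf / 2 * t ^ 2 * ‖d‖ ^ 2)
      (Lf * t * ‖d‖ ^ 2) t := fun t => by
    exact ((((hasDerivAt_pow 2 t).const_mul (Lf / 2)).mul_const (‖d‖ ^ 2)).const_add
      (f x)).congr_deriv (by push_cast; ring)
  have hle := image_le_of_deriv_right_le_deriv_boundary (a := 0) (b := 1)
    (fun t _ => (hφ t).continuousAt.continuousWithinAt) (fun t _ => (hφ t).hasDerivWithinAt)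
    (by simp) (fun t _ => (hB t).continuousAt.continuousWithinAt)
    (fun t _ => (hB t).hasDerivWithinAt)
    (fun t ht => by
      rw [← inner_sub_left]; exact inner_gradient_add_smul_sub_le hlip x d ht.1)
    (right_mem_Icc.2 zero_le_one)
  simp only [one_smul, one_mul, one_pow, d, add_sub_cancel] at hle
  linarith

theorem norm_sub_gradient_step_lt (hf : Differentiable ℝ f)
    (hlip : ∀ x y, ‖gradient f x - gradient f y‖ ≤ Lf * ‖x - y‖) {L : ℝ} (hL : Lf < L)
    {C : Set E} {x y : E} (hmin : IsMinOn f C x) (hy : y ∈ C) (hyx : y ≠ x) :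
    ‖x - (x - (1 / L) • gradient f x)‖ < ‖y - (x - (1 / L) • gradient f x)‖ := by
  set g := gradient f x
  have hd : 0 < ‖y - x‖ := norm_pos_iff.2 (sub_ne_zero.2 hyx)
  have hLf : 0 ≤ Lf :=
    le_of_mul_le_mul_right (by simpa using (norm_nonneg _).trans (hlip y x)) hd
  have hL0 : 0 < L := hLf.trans_lt hL
  have hinner : -(Lf / 2) * ‖y - x‖ ^ 2 ≤ ⟪g, y - x⟫ := by
    linarith [le_add_inner_gradient_add_sq hf hlip x y, isMinOn_iff.1 hmin y hy]
  have hx : ‖x - (x - (1 / L) • g)‖ ^ 2 = (1 / L) ^ 2 * ‖g‖ ^ 2 := by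
    rw [sub_sub_cancel, norm_smul, mul_pow, Real.norm_of_nonneg (by positivity)]
  have hy' : ‖y - (x - (1 / L) • g)‖ ^ 2
      = ‖y - x‖ ^ 2 + 2 * (1 / L) * ⟪g, y - x⟫ + (1 / L) ^ 2 * ‖g‖ ^ 2 := by
    rw [show y - (x - (1 / L) • g) = (y - x) + (1 / L) • g by abel, norm_add_sq_real,
      real_inner_smul_right, norm_smul, mul_pow, Real.norm_of_nonneg (by positivity),
      real_inner_comm]
    ring
  -- by `hinner`, the left side is at least `(L - Lf)‖y - x‖²`
  have hgap : 0 < L * (‖y - (x - (1 / L) • g)‖ ^ 2 - ‖x - (x - (1 / L) • g)‖ ^ 2) := by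
    have hexpand : L * (‖y - x‖ ^ 2 + 2 * (1 / L) * ⟪g, y - x⟫)
        = L * ‖y - x‖ ^ 2 + 2 * ⟪g, y - x⟫ := by
      field_simp
    rw [hx, hy', add_sub_cancel_right, hexpand]
    nlinarith [sq_pos_of_pos hd]
  exact lt_of_pow_lt_pow_left₀ 2 (norm_nonneg _) (by nlinarith)

end Descent

theorem setOf_isNearest_eq_singleton {E : Type*} [SeminormedAddGroup E] {C : Set E} {x w : E}
    (hx : x ∈ C) (hnear : ∀ y ∈ C, y ≠ x → ‖x - w‖ < ‖y - w‖) :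
    {y | y ∈ C ∧ ∀ z ∈ C, ‖y - w‖ ≤ ‖z - w‖} = {x} := by
  ext y
  refine ⟨fun ⟨hy, hymin⟩ => ?_, ?_⟩
  · by_contra hyx
    exact (hnear y hy hyx).not_ge (hymin x hx)
  · rintro rfl
    refine ⟨hx, fun z hz => ?_⟩
    rcases eq_or_ne z y with rfl | hzy
    · exact le_rfl
    · exact (hnear z hz hzy).le

/-- An optimal solution is L-stationary for L > L(f), and the projection set is a singleton. -/
theorem stmt7 {n s : ℕ} (f : EuclideanSpace ℝ (Fin n) → ℝ) (hf : ContDiff ℝ 1 f)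
    (Lf L : ℝ)
    (hlip : ∀ x y, ‖gradient f x - gradient f y‖ ≤ Lf * ‖x - y‖)
    (hL : Lf < L)
    (xs : EuclideanSpace ℝ (Fin n)) (hxs : xs ∈ Cs n s)
    (hopt : ∀ x ∈ Cs n s, f xs ≤ f x) :
    xs ∈ projCs n s (xs - (1 / L) • gradient f xs) ∧
    projCs n s (xs - (1 / L) • gradient f xs) = {xs} := by
  have hproj : projCs n s (xs - (1 / L) • gradient f xs) = {xs} :=
    setOf_isNearest_eq_singleton hxs fun y hy hyx =>
      norm_sub_gradient_step_lt (hf.differentiable one_ne_zero) hlip hL (isMinOn_iff.2 hopt)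
        hy hyx
  exact ⟨hproj ▸ rfl, hproj⟩
end
end

section
/- Let f(x) = ‖Ax − b‖² with A s-regular, ∇f Lipschitz with constant L(f) = 2λ_max(AᵀA), and L > L(f). Then the whole sequence {x^k} generated by iterative hard thresholding x^{k+1} ∈ P_{C_s}(x^k − (1/L)∇f(x^k)) converges to a single L-stationary point. -/
noncomputable section
open scoped RealInnerProductSpace

/-!
With `T = A` as an operator on Euclidean space, `f x = ‖T x - b‖²` has gradient
`2 T†(T x - b)` and satisfies `f (x + d) = f x + ⟪∇f x, d⟫ + ‖T d‖²`, where `2 ‖T d‖² ≤ L_f ‖d‖²`.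
Since `x^{k+1}` is at least as close as `x^k` to the gradient step, this gives the sufficient
decrease `f x^{k+1} + (L - L_f)/2 ‖x^{k+1} - x^k‖² ≤ f x^k`, so `x^{k+1} - x^k → 0`, and
every cluster point is `L`-stationary because the projection onto `C_s` has closed graph.

For `s ≤ n`, `s`-regularity makes `T` injective on `s`-sparse vectors. Hence the sparse
sublevel sets of `f` are bounded, and an `L`-stationary point is determined by its support, so
there are finitely many. A bounded sequence with vanishing steps and finitely many cluster
points converges.

For `n ≤ s` every vector is `s`-sparse and IHT is gradient descent with step `1 / L`, which is
Fejér monotone with respect to the minimizers of `f`; the iterates are then bounded and converge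
to their (minimizing) cluster point.
-/

open Filter Topology Set

section ClusterPoints

variable {X : Type*} [MetricSpace X]

theorem Set.Finite.exists_pos_forall_eq_of_dist_lt {C : Set X} (hC : C.Finite) :
    ∃ δ > 0, ∀ p ∈ C, ∀ q ∈ C, dist p q < δ → p = q := by
  have h : ∀ᶠ δ in 𝓝[>] (0 : ℝ), 0 < δ ∧ ∀ p ∈ C, ∀ q ∈ C, dist p q < δ → p = q := by
    refine (eventually_mem_nhdsWithin (a := (0 : ℝ)) (s := Ioi 0)).and ?_
    rw [eventually_all_finite hC]
    intro p _
    rw [eventually_all_finite hC]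
    intro q _
    rcases eq_or_ne p q with rfl | hpq
    · exact .of_forall fun _ _ => rfl
    · filter_upwards [nhdsWithin_le_nhds (gt_mem_nhds (dist_pos.2 hpq))] with δ hδ hlt
      exact absurd hlt hδ.not_gt
  exact h.exists

theorem eventually_exists_mapClusterPt_dist_lt [ProperSpace X] {x : ℕ → X}
    (hx : Bornology.IsBounded (range x)) {ε : ℝ} (hε : 0 < ε) :
    ∀ᶠ k in atTop, ∃ p, MapClusterPt p atTop x ∧ dist (x k) p < ε := by
  set K := closure (range x) ∩ ⋂ p ∈ {p | MapClusterPt p atTop x}, {y | ε ≤ dist y p}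
  have hK : IsCompact K := by
    refine hx.isCompact_closure.inter_right (isClosed_biInter fun p _ => ?_)
    exact isClosed_le continuous_const (continuous_id.dist continuous_const)
  by_contra h
  have hfreq : ∃ᶠ k in atTop, x k ∈ K := by
    refine (not_eventually.1 h).mono fun k hk => ⟨subset_closure (mem_range_self k), ?_⟩
    simpa using hk
  obtain ⟨a, haK, ha⟩ := hK.exists_mapClusterPt_of_frequently hfreq
  have haa : ε ≤ dist a a := mem_iInter₂.1 haK.2 a ha
  rw [dist_self] at haa
  linarith

theorem tendsto_of_finite_mapClusterPt [ProperSpace X] {x : ℕ → X}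
    (hx : Bornology.IsBounded (range x))
    (hstep : Tendsto (fun k => dist (x (k + 1)) (x k)) atTop (𝓝 0))
    (hC : {p | MapClusterPt p atTop x}.Finite) : ∃ p, Tendsto x atTop (𝓝 p) := by
  obtain ⟨δ, hδ, hsep⟩ := hC.exists_pos_forall_eq_of_dist_lt
  obtain ⟨K, hK⟩ := eventually_atTop.1 <|
    (eventually_exists_mapClusterPt_dist_lt hx (by positivity : 0 < δ / 3)).and
      (hstep.eventually (gt_mem_nhds (by positivity : 0 < δ / 3)))
  obtain ⟨p, hp, hxKp⟩ := (hK K le_rfl).1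
  -- two cluster points within `δ / 3` of consecutive iterates are `δ`-close, hence equal
  have hlock : ∀ k ≥ K, dist (x k) p < δ / 3 := by
    intro k hk
    induction k, hk using Nat.le_induction with
    | base => exact hxKp
    | succ k hk ih =>
      obtain ⟨q, hq, hxq⟩ := (hK (k + 1) (by omega)).1
      have hqp : dist q p < δ := by
        calc dist q p ≤ dist q (x (k + 1)) + dist (x (k + 1)) (x k) + dist (x k) p :=
              dist_triangle4 _ _ _ _
          _ < δ / 3 + δ / 3 + δ / 3 := by
              rw [dist_comm] at hxq
              linarith [(hK k hk).2]
          _ = δ := by ring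
      rwa [← hsep q hq p hp hqp]
  refine ⟨p, Metric.tendsto_nhds.2 fun ε hε => ?_⟩
  filter_upwards [eventually_exists_mapClusterPt_dist_lt hx (lt_min hε (by positivity : 0 < δ / 3)),
    eventually_ge_atTop K] with k ⟨q, hq, hxq⟩ hk
  have hqp : dist q p < δ := by
    calc dist q p ≤ dist q (x k) + dist (x k) p := dist_triangle _ _ _
      _ < δ / 3 + δ / 3 := by
          rw [dist_comm] at hxq
          linarith [hlock k hk, min_le_right ε (δ / 3)]
      _ < δ := by linarith
  rw [← hsep q hq p hp hqp]
  exact hxq.trans_le (min_le_left _ _)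

theorem tendsto_of_antitone_dist_of_tendsto_subseq {x : ℕ → X} {p : X}
    (hanti : Antitone fun k => dist (x k) p) {φ : ℕ → ℕ} (hφ : StrictMono φ)
    (hlim : Tendsto (x ∘ φ) atTop (𝓝 p)) : Tendsto x atTop (𝓝 p) := by
  have hinf := tendsto_atTop_ciInf hanti ⟨0, by rintro _ ⟨k, rfl⟩; exact dist_nonneg⟩
  have hzero : ⨅ k, dist (x k) p = 0 :=
    tendsto_nhds_unique (hinf.comp hφ.tendsto_atTop) (tendsto_iff_dist_tendsto_zero.1 hlim)
  rw [tendsto_iff_dist_tendsto_zero, ← hzero]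
  exact hinf

end ClusterPoints

theorem tendsto_zero_of_add_mul_le {u v : ℕ → ℝ} {c : ℝ} (hc : 0 < c) (hv : ∀ k, 0 ≤ v k)
    (hu : BddBelow (range u)) (h : ∀ k, u (k + 1) + c * v k ≤ u k) :
    Tendsto v atTop (𝓝 0) := by
  have hanti : Antitone u := antitone_nat_of_succ_le fun k => by nlinarith [hv k, h k]
  have hlim := tendsto_atTop_ciInf hanti hu
  have hdiff : Tendsto (fun k => (u k - u (k + 1)) / c) atTop (𝓝 0) := by
    simpa using (hlim.sub (hlim.comp (tendsto_add_atTop_nat 1))).div_const c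
  refine tendsto_of_tendsto_of_tendsto_of_le_of_le tendsto_const_nhds hdiff hv fun k => ?_
  rw [le_div_iff₀ hc]
  linarith [h k]

section LeastSquares

variable {E F : Type*} [NormedAddCommGroup E] [InnerProductSpace ℝ E]
  [NormedAddCommGroup F] [InnerProductSpace ℝ F] (T : E →L[ℝ] F) (b : F)

def leastSquares (x : E) : ℝ := ‖T x - b‖ ^ 2

theorem leastSquares_nonneg (x : E) : 0 ≤ leastSquares T b x := sq_nonneg _

variable [CompleteSpace E] [CompleteSpace F]

open ContinuousLinearMap

theorem hasGradientAt_leastSquares (x : E) :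
    HasGradientAt (leastSquares T b) ((2 : ℝ) • adjoint T (T x - b)) x := by
  rw [hasGradientAt_iff_hasFDerivAt]
  refine (T.hasFDerivAt.sub_const b).norm_sq.congr_fderiv ?_
  ext d
  simp [adjoint_inner_left]

theorem gradient_leastSquares :
    gradient (leastSquares T b) = fun x => (2 : ℝ) • adjoint T (T x - b) :=
  funext fun x => (hasGradientAt_leastSquares T b x).gradient

theorem continuous_gradient_leastSquares : Continuous (gradient (leastSquares T b)) := by
  rw [gradient_leastSquares]
  fun_prop

theorem gradient_leastSquares_add (x d : E) :
    gradient (leastSquares T b) (x + d) =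
      gradient (leastSquares T b) x + (2 : ℝ) • adjoint T (T d) := by
  simp only [gradient_leastSquares]
  rw [map_add, add_sub_right_comm, map_add, smul_add]

theorem leastSquares_add (x d : E) :
    leastSquares T b (x + d) =
      leastSquares T b x + ⟪gradient (leastSquares T b) x, d⟫ + ‖T d‖ ^ 2 := by
  have h : T (x + d) - b = (T x - b) + T d := by rw [map_add]; abel
  rw [leastSquares, leastSquares, h, norm_add_sq_real, gradient_leastSquares,
    real_inner_smul_left, adjoint_inner_left]

theorem two_mul_norm_apply_sq_le_of_lipschitz {Lf : ℝ}
    (hlip : ∀ x y, ‖gradient (leastSquares T b) x - gradient (leastSquares T b) y‖ ≤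
      Lf * ‖x - y‖) (d : E) :
    2 * ‖T d‖ ^ 2 ≤ Lf * ‖d‖ ^ 2 := by
  have hd : ‖(2 : ℝ) • adjoint T (T d)‖ ≤ Lf * ‖d‖ := by
    have h := hlip (0 + d) 0
    rwa [gradient_leastSquares_add, add_sub_cancel_left, zero_add, sub_zero] at h
  calc 2 * ‖T d‖ ^ 2 = ⟪(2 : ℝ) • adjoint T (T d), d⟫ := by
        rw [real_inner_smul_left, adjoint_inner_left, real_inner_self_eq_norm_sq]
    _ ≤ ‖(2 : ℝ) • adjoint T (T d)‖ * ‖d‖ := real_inner_le_norm _ _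
    _ ≤ Lf * ‖d‖ * ‖d‖ := by gcongr
    _ = Lf * ‖d‖ ^ 2 := by ring

theorem exists_gradient_leastSquares_eq_zero [FiniteDimensional ℝ E] :
    ∃ z, gradient (leastSquares T b) z = 0 := by
  set K : Submodule ℝ F := LinearMap.range (T : E →ₗ[ℝ] F)
  obtain ⟨z, hz⟩ : K.starProjection b ∈ K := K.starProjection_apply_mem b
  have horth : T z - b ∈ Kᗮ := by
    rw [← neg_sub, show T z = _ from hz]
    exact Kᗮ.neg_mem (K.sub_starProjection_mem_orthogonal b)
  refine ⟨z, ?_⟩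
  have hadj : adjoint T (T z - b) = 0 := by
    rw [← inner_self_eq_zero (𝕜 := ℝ), adjoint_inner_left]
    exact K.inner_left_of_mem_orthogonal ⟨_, rfl⟩ horth
  simp only [gradient_leastSquares, hadj, smul_zero]

variable {T b} {Lf L : ℝ} (hT : ∀ d, 2 * ‖T d‖ ^ 2 ≤ Lf * ‖d‖ ^ 2)
include hT

theorem leastSquares_add_le_of_norm_sub_le (hL : 0 < L) {x y : E}
    (hy : ‖y - (x - (1 / L) • gradient (leastSquares T b) x)‖ ≤
      ‖x - (x - (1 / L) • gradient (leastSquares T b) x)‖) :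
    leastSquares T b y + (L - Lf) / 2 * ‖y - x‖ ^ 2 ≤ leastSquares T b x := by
  set g := gradient (leastSquares T b) x
  have hclose : ‖(y - x) + (1 / L) • g‖ ^ 2 ≤ ‖(1 / L) • g‖ ^ 2 := by
    have h : ‖(y - x) + (1 / L) • g‖ ≤ ‖(1 / L) • g‖ := by
      convert hy using 2 <;> abel
    gcongr
  rw [norm_add_sq_real, real_inner_smul_right, real_inner_comm] at hclose
  have hinner : ⟪g, y - x⟫ ≤ -(L / 2) * ‖y - x‖ ^ 2 := by
    have h := mul_le_mul_of_nonneg_left hclose hL.le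
    field_simp at h
    nlinarith
  have hexp := leastSquares_add T b x (y - x)
  rw [add_sub_cancel] at hexp
  nlinarith [hT (y - x)]

theorem norm_sub_gradient_step_le (hLf : Lf ≤ L) (hL : 0 < L) {z : E}
    (hz : gradient (leastSquares T b) z = 0) (x : E) :
    ‖x - (1 / L) • gradient (leastSquares T b) x - z‖ ≤ ‖x - z‖ := by
  set g := gradient (leastSquares T b) x
  set c := 1 / L
  have hcL : c * L = 1 := one_div_mul_cancel hL.ne'
  have hc : 0 < c := one_div_pos.2 hL
  have hvx : z + (x - z) = x := add_sub_cancel z x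
  have hg : g = (2 : ℝ) • adjoint T (T (x - z)) := by
    rw [← zero_add ((2 : ℝ) • _), ← hz, ← gradient_leastSquares_add, hvx]
  have hgv : ⟪g, x - z⟫ = 2 * ‖T (x - z)‖ ^ 2 := by
    rw [hg, real_inner_smul_left, adjoint_inner_left, real_inner_self_eq_norm_sq]
  have hfx := leastSquares_add T b z (x - z)
  rw [hvx, hz, inner_zero_left, add_zero] at hfx
  have hmin := leastSquares_add T b z (x - c • g - z)
  rw [add_sub_cancel, hz, inner_zero_left, add_zero] at hmin
  have hstep := leastSquares_add T b x (-(c • g))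
  rw [← sub_eq_add_neg, inner_neg_right, real_inner_smul_right, real_inner_self_eq_norm_sq,
    map_neg, norm_neg, map_smul, norm_smul, Real.norm_of_nonneg hc.le] at hstep
  have hTg : c ^ 2 * ‖T g‖ ^ 2 ≤ c * ‖g‖ ^ 2 / 2 := by
    have h2 : 2 * ‖T g‖ ^ 2 ≤ L * ‖g‖ ^ 2 :=
      (hT g).trans (mul_le_mul_of_nonneg_right hLf (sq_nonneg _))
    have h3 := mul_le_mul_of_nonneg_left h2 (sq_nonneg c)
    have h4 : c ^ 2 * (L * ‖g‖ ^ 2) = c * ‖g‖ ^ 2 := by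
      rw [← mul_assoc, sq, mul_assoc c c L, hcL, mul_one]
    linarith
  -- the step lowers `f` at most to its minimum `f z`, which bounds `‖g‖` by `‖T (x - z)‖`
  have hgTv : c * ‖g‖ ^ 2 ≤ 2 * ‖T (x - z)‖ ^ 2 := by
    nlinarith [sq_nonneg ‖T (x - c • g - z)‖]
  refine (sq_le_sq₀ (norm_nonneg _) (norm_nonneg _)).1 ?_
  rw [sub_right_comm, norm_sub_sq_real, real_inner_smul_right, real_inner_comm, hgv, norm_smul,
    Real.norm_of_nonneg hc.le, mul_pow]
  nlinarith

end LeastSquares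

section Sparsity

variable {n s : ℕ}

def coordSupport (x : EuclideanSpace ℝ (Fin n)) : Finset (Fin n) :=
  Finset.univ.filter fun i => x i ≠ 0

@[simp]
theorem mem_coordSupport {x : EuclideanSpace ℝ (Fin n)} {i : Fin n} :
    i ∈ coordSupport x ↔ x i ≠ 0 := by
  simp [coordSupport]

def coordSubspace (S : Finset (Fin n)) : Submodule ℝ (EuclideanSpace ℝ (Fin n)) where
  carrier := {x | ∀ i ∉ S, x i = 0}
  add_mem' hx hy i hi := by simp [hx i hi, hy i hi]
  zero_mem' _ _ := rfl
  smul_mem' c _ hx i hi := by simp [hx i hi]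

theorem mem_coordSubspace {S : Finset (Fin n)} {x : EuclideanSpace ℝ (Fin n)} :
    x ∈ coordSubspace S ↔ coordSupport x ⊆ S := by
  simp only [Finset.subset_iff, coordSupport, Finset.mem_filter, Finset.mem_univ, true_and]
  exact forall_congr' fun i => not_imp_comm

theorem coordSubspace_subset_Cs {S : Finset (Fin n)} (hS : S.card ≤ s) :
    (coordSubspace S : Set (EuclideanSpace ℝ (Fin n))) ⊆ Cs n s :=
  fun _ hx => (Finset.card_le_card (mem_coordSubspace.1 hx)).trans hS

theorem Cs_eq_biUnion_coordSubspace :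
    Cs n s = ⋃ S ∈ {S : Finset (Fin n) | S.card ≤ s}, (coordSubspace S : Set _) := by
  ext x
  simp only [mem_iUnion, exists_prop]
  exact ⟨fun hx => ⟨_, hx, mem_coordSubspace.2 subset_rfl⟩,
    fun ⟨_, hS, hx⟩ => coordSubspace_subset_Cs hS hx⟩

theorem isClosed_Cs : IsClosed (Cs n s) := by
  rw [Cs_eq_biUnion_coordSubspace]
  exact (toFinite _).isClosed_biUnion fun S _ => Submodule.closed_of_finiteDimensional _

theorem Cs_eq_univ (h : n ≤ s) : Cs n s = univ :=
  eq_univ_of_forall fun _ => ((Finset.card_le_univ _).trans_eq (Fintype.card_fin n)).trans h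

theorem eq_of_mem_projCs (h : n ≤ s) {w y : EuclideanSpace ℝ (Fin n)}
    (hy : y ∈ projCs n s w) : y = w := by
  have hw := hy.2 w (Cs_eq_univ h ▸ mem_univ w)
  rwa [sub_self, norm_zero, norm_le_zero_iff, sub_eq_zero] at hw

theorem apply_eq_of_mem_projCs {w y : EuclideanSpace ℝ (Fin n)} (hy : y ∈ projCs n s w)
    {i : Fin n} (hi : y i ≠ 0) : y i = w i := by
  classical
  set c := (y - w) i
  -- correcting the `i`-th entry of `y` keeps it `s`-sparse and moves it `|c|` closer to `w`
  have hz : y - EuclideanSpace.single i c ∈ Cs n s := by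
    refine (Finset.card_le_card fun j hj => ?_).trans hy.1
    simp only [Finset.mem_filter, Finset.mem_univ, true_and] at hj ⊢
    rcases eq_or_ne j i with rfl | hji
    · exact hi
    · simpa [hji] using hj
  have h := pow_le_pow_left₀ (norm_nonneg _) (hy.2 _ hz) 2
  rw [sub_right_comm y, norm_sub_sq_real (y - w), EuclideanSpace.inner_single_right,
    PiLp.norm_single, Real.norm_eq_abs, sq_abs, conj_trivial] at h
  change _ ≤ _ - 2 * (c * c) + _ at h
  have hc : c = 0 := by nlinarith
  exact sub_eq_zero.1 hc

theorem mem_projCs_of_tendsto {ι : Type*} {l : Filter ι} [l.NeBot]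
    {y w : ι → EuclideanSpace ℝ (Fin n)} {y₀ w₀ : EuclideanSpace ℝ (Fin n)}
    (h : ∀ i, y i ∈ projCs n s (w i)) (hy : Tendsto y l (𝓝 y₀)) (hw : Tendsto w l (𝓝 w₀)) :
    y₀ ∈ projCs n s w₀ :=
  ⟨isClosed_Cs.mem_of_tendsto hy (.of_forall fun i => (h i).1), fun z hz =>
    le_of_tendsto_of_tendsto' (hy.sub hw).norm (tendsto_const_nhds.sub hw).norm
      fun i => (h i).2 z hz⟩

end Sparsity

section IHT

variable {n s : ℕ}

def IsLStationary (s : ℕ) (f : EuclideanSpace ℝ (Fin n) → ℝ) (L : ℝ)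
    (p : EuclideanSpace ℝ (Fin n)) : Prop :=
  p ∈ projCs n s (p - (1 / L) • gradient f p)

theorem IsLStationary.gradient_apply_eq_zero {f : EuclideanSpace ℝ (Fin n) → ℝ} {L : ℝ}
    {p : EuclideanSpace ℝ (Fin n)} (hp : IsLStationary s f L p) (hL : L ≠ 0) {i : Fin n}
    (hi : p i ≠ 0) : gradient f p i = 0 := by
  have h := apply_eq_of_mem_projCs hp hi
  rw [PiLp.sub_apply, PiLp.smul_apply, smul_eq_mul, eq_comm, sub_eq_self, mul_eq_zero] at h
  exact h.resolve_left (one_div_ne_zero hL)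

theorem mem_Cs_of_iht {f : EuclideanSpace ℝ (Fin n) → ℝ} {L : ℝ}
    {x : ℕ → EuclideanSpace ℝ (Fin n)} (hx₀ : x 0 ∈ Cs n s)
    (hiter : ∀ k, x (k + 1) ∈ projCs n s (x k - (1 / L) • gradient f (x k))) :
    ∀ k, x k ∈ Cs n s
  | 0 => hx₀
  | k + 1 => (hiter k).1

theorem isLStationary_of_mapClusterPt {f : EuclideanSpace ℝ (Fin n) → ℝ} {L : ℝ}
    (hf : Continuous (gradient f)) {x : ℕ → EuclideanSpace ℝ (Fin n)}
    (hiter : ∀ k, x (k + 1) ∈ projCs n s (x k - (1 / L) • gradient f (x k)))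
    (hstep : Tendsto (fun k => x (k + 1) - x k) atTop (𝓝 0)) {p : EuclideanSpace ℝ (Fin n)}
    (hp : MapClusterPt p atTop x) : IsLStationary s f L p := by
  obtain ⟨φ, hφ, hlim⟩ := hp.tendsto_subseq
  have hnext : Tendsto (fun k => x (φ k + 1)) atTop (𝓝 p) := by
    simpa using hlim.add (hstep.comp hφ.tendsto_atTop)
  exact mem_projCs_of_tendsto (fun k => hiter (φ k)) hnext
    (hlim.sub (((hf.tendsto p).comp hlim).const_smul _))

variable {F : Type*} [NormedAddCommGroup F] [InnerProductSpace ℝ F]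
  {T : EuclideanSpace ℝ (Fin n) →L[ℝ] F} {b : F}

theorem isBounded_coordSubspace_inter_preimage_closedBall
    (hinj : ∀ d ∈ Cs n s, T d = 0 → d = 0) {S : Finset (Fin n)} (hS : S.card ≤ s) (r : ℝ) :
    Bornology.IsBounded ((coordSubspace S : Set _) ∩ T ⁻¹' Metric.closedBall 0 r) := by
  have hker : LinearMap.ker ((T : _ →ₗ[ℝ] F).domRestrict (coordSubspace S)) = ⊥ :=
    LinearMap.ker_eq_bot'.2 fun d hd => Subtype.ext (hinj d (coordSubspace_subset_Cs hS d.2) hd)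
  obtain ⟨K, -, hK⟩ := LinearMap.exists_antilipschitzWith _ hker
  refine (Metric.isBounded_closedBall (x := 0) (r := K * r)).subset ?_
  rintro x ⟨hxS, hTx⟩
  have h := hK.le_mul_dist ⟨x, hxS⟩ 0
  simp only [mem_preimage, Metric.mem_closedBall, dist_zero_right] at hTx ⊢
  simp only [dist_zero_right, map_zero, LinearMap.domRestrict_apply, Submodule.coe_norm,
    ContinuousLinearMap.coe_coe] at h
  exact h.trans (by gcongr)

theorem isBounded_Cs_inter_leastSquares_le (hinj : ∀ d ∈ Cs n s, T d = 0 → d = 0) (c : ℝ) :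
    Bornology.IsBounded {x | x ∈ Cs n s ∧ leastSquares T b x ≤ c} := by
  refine ((Bornology.isBounded_biUnion (toFinite {S : Finset (Fin n) | S.card ≤ s})).2
    fun S hS => isBounded_coordSubspace_inter_preimage_closedBall hinj hS
      (√c + ‖b‖)).subset ?_
  rintro x ⟨hx, hfx⟩
  rw [Cs_eq_biUnion_coordSubspace, mem_iUnion₂] at hx
  obtain ⟨S, hS, hxS⟩ := hx
  refine mem_iUnion₂.2 ⟨S, hS, hxS, ?_⟩
  rw [mem_preimage, mem_closedBall_zero_iff]
  have hres : ‖T x - b‖ ≤ √c := Real.le_sqrt_of_sq_le hfx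
  calc ‖T x‖ = ‖(T x - b) + b‖ := by rw [sub_add_cancel]
    _ ≤ ‖T x - b‖ + ‖b‖ := norm_add_le _ _
    _ ≤ √c + ‖b‖ := by gcongr

variable [CompleteSpace F]

-- On a common support both gradients vanish, so `‖T (p - q)‖² = ⟪T† T (p - q), p - q⟫ = 0`,
-- while `p - q` is `s`-sparse.
theorem injOn_coordSupport_isLStationary (hinj : ∀ d ∈ Cs n s, T d = 0 → d = 0) {L : ℝ}
    (hL : L ≠ 0) : InjOn coordSupport {p | IsLStationary s (leastSquares T b) L p} := by
  intro p hp q hq hpq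
  rw [mem_ofPred_eq] at hp hq
  have hzero : ∀ i, p i = 0 ↔ q i = 0 := fun i => by
    simpa [mem_coordSupport] using (congrArg (i ∈ ·) hpq).to_iff.not
  set d := p - q
  have hdp : coordSupport d ⊆ coordSupport p := by
    intro i
    simp only [mem_coordSupport, not_imp_not]
    intro hpi
    simp [d, hpi, (hzero i).1 hpi]
  have hgrad : gradient (leastSquares T b) p - gradient (leastSquares T b) q =
      (2 : ℝ) • ContinuousLinearMap.adjoint T (T d) := by
    have h := gradient_leastSquares_add T b q d
    rw [add_sub_cancel] at h
    rw [h, add_sub_cancel_left]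
  have hTd : 2 * ‖T d‖ ^ 2 = 0 := by
    rw [← real_inner_self_eq_norm_sq, ← ContinuousLinearMap.adjoint_inner_left,
      ← real_inner_smul_left, ← hgrad, PiLp.inner_apply]
    refine Finset.sum_eq_zero fun i _ => ?_
    by_cases hpi : p i = 0
    · have hdi : d i = 0 := by simpa [mem_coordSupport, hpi] using mt (@hdp i)
      rw [hdi, inner_zero_right]
    · rw [PiLp.sub_apply, hp.gradient_apply_eq_zero hL hpi,
        hq.gradient_apply_eq_zero hL (mt (hzero i).2 hpi), sub_zero, inner_zero_left]
  have hd : d = 0 := hinj d ((Finset.card_le_card hdp).trans hp.1) (by simpa using hTd)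
  exact sub_eq_zero.1 hd

theorem finite_setOf_isLStationary (hinj : ∀ d ∈ Cs n s, T d = 0 → d = 0) {L : ℝ}
    (hL : L ≠ 0) : {p | IsLStationary s (leastSquares T b) L p}.Finite :=
  (toFinite _).of_finite_image (injOn_coordSupport_isLStationary hinj hL)

variable {Lf L : ℝ} {x : ℕ → EuclideanSpace ℝ (Fin n)}
  (hT : ∀ d, 2 * ‖T d‖ ^ 2 ≤ Lf * ‖d‖ ^ 2) (hL₀ : 0 < L) (hx₀ : x 0 ∈ Cs n s)
  (hiter : ∀ k, x (k + 1) ∈ projCs n s (x k - (1 / L) • gradient (leastSquares T b) (x k)))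
include hT hL₀ hx₀ hiter

theorem leastSquares_succ_add_le_of_iht (k : ℕ) :
    leastSquares T b (x (k + 1)) + (L - Lf) / 2 * ‖x (k + 1) - x k‖ ^ 2 ≤
      leastSquares T b (x k) :=
  leastSquares_add_le_of_norm_sub_le hT hL₀ ((hiter k).2 _ (mem_Cs_of_iht hx₀ hiter k))

theorem antitone_leastSquares_of_iht (hL : Lf ≤ L) :
    Antitone fun k => leastSquares T b (x k) :=
  antitone_nat_of_succ_le fun k => by
    nlinarith [leastSquares_succ_add_le_of_iht hT hL₀ hx₀ hiter k, sq_nonneg ‖x (k + 1) - x k‖]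

theorem tendsto_succ_sub_of_iht (hL : Lf < L) : Tendsto (fun k => x (k + 1) - x k) atTop (𝓝 0) := by
  have hsq : Tendsto (fun k => ‖x (k + 1) - x k‖ ^ 2) atTop (𝓝 0) :=
    tendsto_zero_of_add_mul_le (u := fun k => leastSquares T b (x k)) (by linarith)
      (fun _ => sq_nonneg _) ⟨0, by rintro _ ⟨k, rfl⟩; exact leastSquares_nonneg T b _⟩
      (leastSquares_succ_add_le_of_iht hT hL₀ hx₀ hiter)
  rw [tendsto_zero_iff_norm_tendsto_zero]
  simpa using hsq.sqrt

theorem exists_tendsto_isLStationary_of_injOn (hL : Lf < L) (hinj : ∀ d ∈ Cs n s, T d = 0 → d = 0) :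
    ∃ p, Tendsto x atTop (𝓝 p) ∧ IsLStationary s (leastSquares T b) L p := by
  have hstep := tendsto_succ_sub_of_iht hT hL₀ hx₀ hiter hL
  have hstat : ∀ p, MapClusterPt p atTop x → IsLStationary s (leastSquares T b) L p :=
    fun p => isLStationary_of_mapClusterPt (continuous_gradient_leastSquares T b) hiter hstep
  have hbdd : Bornology.IsBounded (range x) := by
    refine (isBounded_Cs_inter_leastSquares_le (b := b) hinj (leastSquares T b (x 0))).subset ?_
    rintro _ ⟨k, rfl⟩
    exact ⟨mem_Cs_of_iht hx₀ hiter k,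
      antitone_leastSquares_of_iht hT hL₀ hx₀ hiter hL.le (Nat.zero_le k)⟩
  obtain ⟨p, hp⟩ := tendsto_of_finite_mapClusterPt hbdd
    (by simpa [dist_eq_norm] using hstep.norm)
    ((finite_setOf_isLStationary hinj hL₀.ne').subset (ofPred_subset_ofPred.2 hstat))
  exact ⟨p, hp, hstat p hp.mapClusterPt⟩

theorem exists_tendsto_isLStationary_of_le (hL : Lf < L) (hns : n ≤ s) :
    ∃ p, Tendsto x atTop (𝓝 p) ∧ IsLStationary s (leastSquares T b) L p := by
  have hstep := tendsto_succ_sub_of_iht hT hL₀ hx₀ hiter hL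
  have hfejer : ∀ z, gradient (leastSquares T b) z = 0 → Antitone fun k => dist (x k) z :=
    fun z hz => antitone_nat_of_succ_le fun k => by
      rw [dist_eq_norm, dist_eq_norm, eq_of_mem_projCs hns (hiter k)]
      exact norm_sub_gradient_step_le hT hL.le hL₀ hz _
  obtain ⟨z, hz⟩ := exists_gradient_leastSquares_eq_zero T b
  have hbdd : Bornology.IsBounded (range x) :=
    Metric.isBounded_closedBall.subset <| range_subset_iff.2 fun k =>
      Metric.mem_closedBall.2 (hfejer z hz (Nat.zero_le k))
  obtain ⟨p, -, φ, hφ, hlim⟩ := tendsto_subseq_of_bounded hbdd mem_range_self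
  have hp : IsLStationary s (leastSquares T b) L p :=
    isLStationary_of_mapClusterPt (continuous_gradient_leastSquares T b) hiter hstep
      (hlim.mapClusterPt.of_comp hφ.tendsto_atTop)
  have hgp : gradient (leastSquares T b) p = 0 := by
    have h := eq_of_mem_projCs hns hp
    rwa [eq_comm, sub_eq_self, smul_eq_zero, or_iff_right (one_div_ne_zero hL₀.ne')] at h
  exact ⟨p, tendsto_of_antitone_dist_of_tendsto_subseq (hfejer p hgp) hφ hlim, hp⟩

end IHT

def IsSRegular {m n : ℕ} (s : ℕ) (A : Matrix (Fin m) (Fin n) ℝ) : Prop :=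
  ∀ S : Finset (Fin n), S.card = s → LinearIndependent ℝ (fun j : S => fun i => A i j)

theorem IsSRegular.eq_zero_of_mem_Cs {m n s : ℕ} {A : Matrix (Fin m) (Fin n) ℝ}
    (hA : IsSRegular s A) (hsn : s ≤ n) {d : EuclideanSpace ℝ (Fin n)} (hd : d ∈ Cs n s)
    (hAd : Matrix.toLpLin 2 2 A d = 0) : d = 0 := by
  obtain ⟨S, hdS, hS⟩ := Finset.exists_superset_card_eq hd (by simpa using hsn)
  have hoff : ∀ j ∉ S, d j = 0 := fun j hj => by simpa using mt (@hdS j) hj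
  have hcomb : ∑ j : S, d j • (fun i => A i j) = 0 := by
    rw [Finset.sum_coe_sort S fun j => d j • fun i => A i j,
      Finset.sum_subset (Finset.subset_univ S) fun j _ hj => by rw [hoff j hj, zero_smul]]
    ext i
    have h := congrArg (fun v : EuclideanSpace ℝ (Fin m) => v i) hAd
    simpa [Matrix.toLpLin_apply, Matrix.mulVec, dotProduct, Finset.sum_apply, mul_comm] using h
  have hzero := Fintype.linearIndependent_iff.1 (hA S hS) (fun j => d j) hcomb
  ext i
  by_cases hi : i ∈ S
  · exact hzero ⟨i, hi⟩
  · exact hoff i hi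

/-- For f = ‖Ax-b‖² with A s-regular, the whole IHT sequence converges to an
L-stationary point. -/
theorem stmt16 {m n s : ℕ} (A : Matrix (Fin m) (Fin n) ℝ) (b : Fin m → ℝ)
    (hreg : ∀ S : Finset (Fin n), S.card = s →
      LinearIndependent ℝ (fun j : S => fun i => A i j))
    (f : EuclideanSpace ℝ (Fin n) → ℝ)
    (hfdef : ∀ x, f x = ∑ i, (A.mulVec (fun j => x j) i - b i) ^ 2)
    (Lf L : ℝ)
    (hlip : ∀ x y, ‖gradient f x - gradient f y‖ ≤ Lf * ‖x - y‖)
    (hL : Lf < L)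
    (x : ℕ → EuclideanSpace ℝ (Fin n)) (hx0 : x 0 ∈ Cs n s)
    (hiter : ∀ k, x (k + 1) ∈ projCs n s (x k - (1 / L) • gradient f (x k))) :
    ∃ xstar : EuclideanSpace ℝ (Fin n),
      Filter.Tendsto x Filter.atTop (nhds xstar) ∧
      xstar ∈ projCs n s (xstar - (1 / L) • gradient f xstar) := by
  set T := (Matrix.toLpLin 2 2 A).toContinuousLinearMap
  obtain rfl : f = leastSquares T (WithLp.toLp 2 b) := funext fun y => by
    simp [hfdef, leastSquares, EuclideanSpace.norm_sq_eq, T, Matrix.toLpLin_apply]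
  rcases subsingleton_or_nontrivial (EuclideanSpace ℝ (Fin n)) with hn | hn
  · exact ⟨x 0, tendsto_const_nhds.congr fun k => Subsingleton.elim _ _,
      hx0, fun z _ => Subsingleton.elim z (x 0) ▸ le_rfl⟩
  have hT := two_mul_norm_apply_sq_le_of_lipschitz T _ hlip
  obtain ⟨d, hd⟩ := exists_ne (0 : EuclideanSpace ℝ (Fin n))
  have hLf : 0 ≤ Lf := by
    have h := (mul_nonneg zero_le_two (sq_nonneg ‖T d‖)).trans (hT d)
    exact nonneg_of_mul_nonneg_left h (by positivity)
  have hL₀ : 0 < L := hLf.trans_lt hL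
  rcases le_total s n with hsn | hns
  · exact exists_tendsto_isLStationary_of_injOn hT hL₀ hx0 hiter hL
      fun v hv hTv => IsSRegular.eq_zero_of_mem_Cs hreg hsn hv hTv
  · exact exists_tendsto_isLStationary_of_le hT hL₀ hx0 hiter hL hns
end
end
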